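/- Under the setting of the previous expansion, the value of $\beta$ minimizing $\mathbb{E}\|C - \beta C_m\|_F^2$ is $\beta^* = \frac{M_1 + 2M_2}{M_1 + 2M_2\frac{m-1}{K-1}}$, provided the denominator is positive, where $M_1 = \sum_{j=1}^K \|A_jB_j\|_F^2$ and $M_2 = \sum_{j<j'}\mathrm{Tr}((A_jB_j)^T(A_{j'}B_{j'}))$, using the identity $\|C\|_F^2 = M_1 + 2M_2$. -/

import Mathlib

/-!
Averaging over all permutations, every position `k` is sent to every index `j` equally often,
and every ordered pair of distinct positions to every ordered pair of distinct indices equally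
often. Hence `E⟨C, C_m⟩ = (m/K)‖C‖²` and `E‖C_m‖² = (m/K)(M₁ + 2M₂ (m-1)/(K-1))`, so
`E‖C - β C_m‖²` is a quadratic in `β` with leading coefficient `(m/K)·denom`, whose vertex is `β*`.
-/

open Finset
open scoped Nat

namespace Finset

variable {ι M : Type*} [DecidableEq ι] [AddCommMonoid M]

theorem sum_sum_eq_sum_add_sum_offDiag (s : Finset ι) (f : ι → ι → M) :
    ∑ i ∈ s, ∑ j ∈ s, f i j = ∑ i ∈ s, f i i + ∑ p ∈ s.offDiag, f p.1 p.2 := by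
  rw [← sum_product', ← diag_union_offDiag, sum_union (disjoint_diag_offDiag s), sum_diag]

theorem sum_offDiag_eq_two_nsmul [LinearOrder ι] (s : Finset ι) (f : ι → ι → M)
    (hf : ∀ i j, f i j = f j i) :
    ∑ p ∈ s.offDiag, f p.1 p.2 = 2 • ∑ i ∈ s, ∑ j ∈ s, if i < j then f i j else 0 := by
  have hupper : ∑ i ∈ s, ∑ j ∈ s, (if i < j then f i j else 0)
      = ∑ p ∈ s.offDiag, if p.1 < p.2 then f p.1 p.2 else 0 := by
    simp [sum_sum_eq_sum_add_sum_offDiag]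
  have hlower : ∑ p ∈ s.offDiag, (if p.2 < p.1 then f p.1 p.2 else 0)
      = ∑ p ∈ s.offDiag, if p.1 < p.2 then f p.1 p.2 else 0 :=
    sum_equiv (Equiv.prodComm ι ι) (fun p => by simp; tauto)
      fun p _ => by rw [hf]; rfl
  calc ∑ p ∈ s.offDiag, f p.1 p.2
      = ∑ p ∈ s.offDiag, ((if p.1 < p.2 then f p.1 p.2 else 0)
          + if p.2 < p.1 then f p.1 p.2 else 0) := by
        refine sum_congr rfl fun p hp => ?_
        rcases lt_or_gt_of_ne (mem_offDiag.mp hp).2.2 with h | h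
        · simp [h, h.not_gt]
        · simp [h, h.not_gt]
    _ = 2 • ∑ i ∈ s, ∑ j ∈ s, if i < j then f i j else 0 := by
        rw [sum_add_distrib, hlower, hupper, two_nsmul]

end Finset

theorem LinearMap.BilinForm.IsSymm.apply_sub_smul_sub_smul {R M : Type*} [CommRing R]
    [AddCommGroup M] [Module R M] {B : LinearMap.BilinForm R M} (hB : B.IsSymm) (x y : M)
    (c : R) : B (x - c • y) (x - c • y) = B x x - 2 * c * B x y + c ^ 2 * B y y := by
  simp only [map_sub, map_smul, LinearMap.sub_apply, LinearMap.smul_apply, smul_eq_mul,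
    hB.eq y x]
  ring

namespace Equiv.Perm

variable {α : Type*} [Fintype α] [DecidableEq α]

section AddCommMonoid

variable {M : Type*} [AddCommMonoid M]

theorem sum_apply_eq_sum_apply (g : α → M) (k l : α) :
    ∑ σ : Perm α, g (σ k) = ∑ σ : Perm α, g (σ l) := by
  rw [← Equiv.sum_comp (Equiv.mulRight (swap k l))]
  simp [Perm.mul_apply]

theorem sum_apply₂_eq_sum_apply₂ (g : α → α → M) {k k' l l' : α} (hk : k ≠ k') (hl : l ≠ l') :
    ∑ σ : Perm α, g (σ k) (σ k') = ∑ σ : Perm α, g (σ l) (σ l') := by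
  obtain ⟨τ, hτk, hτk'⟩ :=
    MulAction.is_two_pretransitive_iff.mp (isMultiplyPretransitive α 2) hk hl
  rw [← Equiv.sum_comp (Equiv.mulRight τ)]
  simp_all [Perm.mul_apply, Perm.smul_def]

theorem card_smul_sum_apply (g : α → M) (k : α) :
    Fintype.card α • ∑ σ : Perm α, g (σ k) = (Fintype.card α)! • ∑ j, g j :=
  calc Fintype.card α • ∑ σ : Perm α, g (σ k)
      = ∑ l, ∑ σ : Perm α, g (σ l) := by
        rw [← card_univ, ← sum_const]
        exact sum_congr rfl fun l _ => sum_apply_eq_sum_apply g k l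
    _ = ∑ σ : Perm α, ∑ l, g (σ l) := sum_comm
    _ = ∑ _σ : Perm α, ∑ j, g j := sum_congr rfl fun σ _ => Equiv.sum_comp σ g
    _ = (Fintype.card α)! • ∑ j, g j := by rw [sum_const, card_univ, Fintype.card_perm]

theorem card_offDiag_smul_sum_apply₂ (g : α → α → M) {k k' : α} (hk : k ≠ k') :
    #(univ : Finset α).offDiag • ∑ σ : Perm α, g (σ k) (σ k')
      = (Fintype.card α)! • ∑ p ∈ univ.offDiag, g p.1 p.2 :=
  calc #(univ : Finset α).offDiag • ∑ σ : Perm α, g (σ k) (σ k')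
      = ∑ p ∈ univ.offDiag, ∑ σ : Perm α, g (σ p.1) (σ p.2) := by
        rw [← sum_const]
        exact sum_congr rfl fun p hp =>
          sum_apply₂_eq_sum_apply₂ g hk (mem_offDiag.mp hp).2.2
    _ = ∑ σ : Perm α, ∑ p ∈ univ.offDiag, g (σ p.1) (σ p.2) := sum_comm
    _ = ∑ _σ : Perm α, ∑ p ∈ univ.offDiag, g p.1 p.2 := by
        refine sum_congr rfl fun σ _ => sum_equiv (σ.prodCongr σ) (fun p => ?_) fun _ _ => rfl
        simp [σ.injective.ne_iff]
    _ = (Fintype.card α)! • ∑ p ∈ univ.offDiag, g p.1 p.2 := by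
        rw [sum_const, card_univ, Fintype.card_perm]

end AddCommMonoid

theorem factorial_inv_mul_sum_apply (g : α → ℝ) (k : α) :
    ((Fintype.card α)! : ℝ)⁻¹ * ∑ σ : Perm α, g (σ k) = (Fintype.card α : ℝ)⁻¹ * ∑ j, g j := by
  have hcard : (Fintype.card α : ℝ) ≠ 0 := Nat.cast_ne_zero.mpr (Fintype.card_pos_iff.mpr ⟨k⟩).ne'
  have h := card_smul_sum_apply g k
  rw [nsmul_eq_mul, nsmul_eq_mul] at h
  field_simp
  linear_combination h

theorem factorial_inv_mul_sum_apply₂ (g : α → α → ℝ) {k k' : α} (hk : k ≠ k') :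
    ((Fintype.card α)! : ℝ)⁻¹ * ∑ σ : Perm α, g (σ k) (σ k')
      = (#(univ : Finset α).offDiag : ℝ)⁻¹ * ∑ p ∈ univ.offDiag, g p.1 p.2 := by
  have hcard : (#(univ : Finset α).offDiag : ℝ) ≠ 0 :=
    Nat.cast_ne_zero.mpr (card_ne_zero.mpr ⟨(k, k'), by simp [hk]⟩)
  have h := card_offDiag_smul_sum_apply₂ g hk
  rw [nsmul_eq_mul, nsmul_eq_mul] at h
  field_simp
  linear_combination h

variable {E : Type*} [AddCommGroup E] [Module ℝ E] (B : LinearMap.BilinForm ℝ E)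
  (v : α → E) (S : Finset α)

theorem factorial_inv_mul_sum_bilin_sum_apply :
    ((Fintype.card α)! : ℝ)⁻¹ * ∑ σ : Perm α, B (∑ j, v j) (∑ k ∈ S, v (σ k))
      = #S / Fintype.card α * B (∑ j, v j) (∑ j, v j) := by
  simp_rw [map_sum (B _)]
  rw [sum_comm, mul_sum]
  simp_rw [factorial_inv_mul_sum_apply (fun j => B (∑ i, v i) (v j))]
  rw [sum_const, nsmul_eq_mul, ← map_sum (B _)]
  ring

theorem factorial_inv_mul_sum_bilin_sum_apply_self :
    ((Fintype.card α)! : ℝ)⁻¹ * ∑ σ : Perm α, B (∑ k ∈ S, v (σ k)) (∑ k ∈ S, v (σ k))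
      = #S / Fintype.card α * (∑ j, B (v j) (v j)
          + (∑ p ∈ univ.offDiag, B (v p.1) (v p.2)) * ((#S - 1) / (Fintype.card α - 1))) := by
  simp_rw [LinearMap.map_sum₂, map_sum, sum_sum_eq_sum_add_sum_offDiag]
  rw [sum_add_distrib, sum_comm, sum_comm (t := S.offDiag), mul_add, mul_sum, mul_sum,
    sum_congr rfl fun k _ => factorial_inv_mul_sum_apply (fun j => B (v j) (v j)) k,
    sum_congr rfl fun p hp =>
      factorial_inv_mul_sum_apply₂ (fun i j => B (v i) (v j)) (mem_offDiag.mp hp).2.2,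
    sum_const, sum_const, offDiag_card, offDiag_card, card_univ, nsmul_eq_mul, nsmul_eq_mul,
    Nat.cast_sub (Nat.le_mul_self _), Nat.cast_sub (Nat.le_mul_self _)]
  push_cast
  rw [show (Fintype.card α : ℝ) * Fintype.card α - Fintype.card α
      = Fintype.card α * (Fintype.card α - 1) by ring, mul_inv]
  ring

theorem factorial_inv_mul_sum_bilin_sub_smul (hB : B.IsSymm) (β : ℝ) :
    ((Fintype.card α)! : ℝ)⁻¹ * ∑ σ : Perm α,
        B (∑ j, v j - β • ∑ k ∈ S, v (σ k)) (∑ j, v j - β • ∑ k ∈ S, v (σ k))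
      = B (∑ j, v j) (∑ j, v j) - 2 * β * (#S / Fintype.card α * B (∑ j, v j) (∑ j, v j))
        + β ^ 2 * (#S / Fintype.card α * (∑ j, B (v j) (v j)
          + (∑ p ∈ univ.offDiag, B (v p.1) (v p.2)) * ((#S - 1) / (Fintype.card α - 1)))) := by
  rw [← factorial_inv_mul_sum_bilin_sum_apply, ← factorial_inv_mul_sum_bilin_sum_apply_self]
  simp_rw [hB.apply_sub_smul_sub_smul]
  rw [sum_add_distrib, sum_sub_distrib, sum_const, card_univ, Fintype.card_perm, nsmul_eq_mul,
    ← mul_sum, ← mul_sum]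
  field_simp

end Equiv.Perm

theorem quadratic_vertex_le (a s c d β : ℝ) (hs : 0 ≤ s) (hd : 0 < d) :
    a - 2 * (c / d) * (s * c) + (c / d) ^ 2 * (s * d) ≤ a - 2 * β * (s * c) + β ^ 2 * (s * d) := by
  have key : a - 2 * β * (s * c) + β ^ 2 * (s * d)
      = a - 2 * (c / d) * (s * c) + (c / d) ^ 2 * (s * d) + s * d * (β - c / d) ^ 2 := by
    field_simp
    ring
  rw [key]
  have := mul_nonneg (mul_nonneg hs hd.le) (sq_nonneg (β - c / d))
  linarith

def Matrix.frobeniusForm (m n : Type*) [Fintype m] [Fintype n] :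
    LinearMap.BilinForm ℝ (Matrix m n ℝ) :=
  LinearMap.mk₂ ℝ (fun X Y => ∑ a, ∑ b, X a b * Y a b)
    (by simp [add_mul, sum_add_distrib]) (by simp [mul_sum, mul_assoc])
    (by simp [mul_add, sum_add_distrib]) (by simp [mul_sum, mul_left_comm])

theorem Matrix.isSymm_frobeniusForm (m n : Type*) [Fintype m] [Fintype n] :
    (Matrix.frobeniusForm m n).IsSymm :=
  ⟨fun X Y => by simp [Matrix.frobeniusForm, mul_comm]⟩

theorem stmt5_general (K m p q : ℕ) (hmK : m ≤ K)
    (M : Fin K → Matrix (Fin p) (Fin q) ℝ) :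
    let inner : Matrix (Fin p) (Fin q) ℝ → Matrix (Fin p) (Fin q) ℝ → ℝ :=
      fun X Y => ∑ a, ∑ b, X a b * Y a b
    let C : Matrix (Fin p) (Fin q) ℝ := ∑ j, M j
    let M1 : ℝ := ∑ j, inner (M j) (M j)
    let M2 : ℝ := ∑ j : Fin K, ∑ j' : Fin K, if j < j' then inner (M j) (M j') else 0
    let Cm : Equiv.Perm (Fin K) → Matrix (Fin p) (Fin q) ℝ :=
      fun σ => ∑ k ∈ Finset.univ.filter (fun k : Fin K => (k : ℕ) < m), M (σ k)
    let f : ℝ → ℝ := fun β =>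
      (Nat.factorial K : ℝ)⁻¹ *
        ∑ σ : Equiv.Perm (Fin K), inner (C - β • Cm σ) (C - β • Cm σ)
    let denom : ℝ := M1 + 2 * M2 * (((m : ℝ) - 1) / ((K : ℝ) - 1))
    0 < denom → ∀ β : ℝ, f ((M1 + 2 * M2) / denom) ≤ f β := by
  intro inner C M1 M2 Cm f denom hdenom β
  set B := Matrix.frobeniusForm (Fin p) (Fin q)
  have hB := Matrix.isSymm_frobeniusForm (Fin p) (Fin q)
  have hS : #{k : Fin K | (k : ℕ) < m} = m := by rw [Fin.card_filter_val_lt]; omega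
  have hP : ∑ p ∈ univ.offDiag, B (M p.1) (M p.2) = 2 * M2 := by
    rw [sum_offDiag_eq_two_nsmul _ _ fun i j => hB.eq (M i) (M j), nsmul_eq_mul]
    rfl
  have hC : B (∑ j, M j) (∑ j, M j) = M1 + 2 * M2 := by
    rw [← hP, LinearMap.map_sum₂]
    simp_rw [map_sum]
    rw [sum_sum_eq_sum_add_sum_offDiag]
    rfl
  have hf (b : ℝ) :
      f b = (M1 + 2 * M2) - 2 * b * (m / K * (M1 + 2 * M2)) + b ^ 2 * (m / K * denom) := by
    have h := Equiv.Perm.factorial_inv_mul_sum_bilin_sub_smul B M {k : Fin K | (k : ℕ) < m} hB b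
    rwa [Fintype.card_fin, hS, hC, hP] at h
  rw [hf, hf]
  exact quadratic_vertex_le _ _ _ _ β (by positivity) hdenom

/-- The optimal scaling `β* = (M₁ + 2M₂)/(M₁ + 2M₂ (m-1)/(K-1))` minimizes the
expected squared Frobenius error `E‖C - β C_m‖_F²` over `β ∈ ℝ`, provided the
denominator is positive. -/
theorem stmt5 (K m p q : ℕ) (hK : 2 ≤ K) (hm : 1 ≤ m) (hmK : m ≤ K)
    (M : Fin K → Matrix (Fin p) (Fin q) ℝ) :
    let inner : Matrix (Fin p) (Fin q) ℝ → Matrix (Fin p) (Fin q) ℝ → ℝ :=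
      fun X Y => ∑ a, ∑ b, X a b * Y a b
    let C : Matrix (Fin p) (Fin q) ℝ := ∑ j, M j
    let M1 : ℝ := ∑ j, inner (M j) (M j)
    let M2 : ℝ := ∑ j : Fin K, ∑ j' : Fin K, if j < j' then inner (M j) (M j') else 0
    let Cm : Equiv.Perm (Fin K) → Matrix (Fin p) (Fin q) ℝ :=
      fun σ => ∑ k ∈ Finset.univ.filter (fun k : Fin K => (k : ℕ) < m), M (σ k)
    let f : ℝ → ℝ := fun β =>
      (Nat.factorial K : ℝ)⁻¹ *
        ∑ σ : Equiv.Perm (Fin K), inner (C - β • Cm σ) (C - β • Cm σ)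
    let denom : ℝ := M1 + 2 * M2 * (((m : ℝ) - 1) / ((K : ℝ) - 1))
    0 < denom → ∀ β : ℝ, f ((M1 + 2 * M2) / denom) ≤ f β :=
  stmt5_general K m p q hmK M
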